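/- For every L > 0 and ρ₁,ρ₂ ∈ [0,1), the Bhattacharyya contrast d_B(ρ₁,ρ₂|L) = L·[½(log(1-ρ₁²)+log(1-ρ₂²)) − 2·log 2 + log((4−(ρ₁+ρ₂)²)/((1-ρ₁²)(1-ρ₂²)))] is nonnegative and equals zero if and only if ρ₁ = ρ₂. -/

import Mathlib

/-! With `a = 1 - r₁²`, `b = 1 - r₂²` and `c = 4 - (r₁ + r₂)²`, the contrast is
`d_B = (L / 2) · log (c² / (16ab))`, and the polynomial identity
`c² - 16ab = (r₁ - r₂)² ((r₁ + r₂)² + 4 (r₁r₂ + 2))` shows that the argument of the logarithm is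
at least `1`, with equality exactly when `r₁ = r₂`, as soon as `|r₁|, |r₂| < 1`. -/

noncomputable def dB (L r1 r2 : ℝ) : ℝ :=
  L * ((Real.log (1 - r1 ^ 2) + Real.log (1 - r2 ^ 2)) / 2 - 2 * Real.log 2 +
    Real.log ((4 - (r1 + r2) ^ 2) / ((1 - r1 ^ 2) * (1 - r2 ^ 2))))

open Real

/-- The inverse square of the Bhattacharyya coefficient `exp (-d_B / L)`. -/
noncomputable def dBRatio (r1 r2 : ℝ) : ℝ :=
  (4 - (r1 + r2) ^ 2) ^ 2 / (16 * ((1 - r1 ^ 2) * (1 - r2 ^ 2)))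

section
variable {r1 r2 : ℝ}

theorem dB_eq_mul_log_dBRatio (L : ℝ) (h1 : 1 - r1 ^ 2 ≠ 0) (h2 : 1 - r2 ^ 2 ≠ 0)
    (h12 : 4 - (r1 + r2) ^ 2 ≠ 0) : dB L r1 r2 = L / 2 * log (dBRatio r1 r2) := by
  have h16 : log 16 = 4 * log 2 := by
    rw [show (16 : ℝ) = 2 ^ 4 by norm_num, log_pow]
    norm_num
  rw [dB, dBRatio, log_div h12 (mul_ne_zero h1 h2), log_div (pow_ne_zero 2 h12)
    (mul_ne_zero (by norm_num) (mul_ne_zero h1 h2)), log_mul (by norm_num) (mul_ne_zero h1 h2),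
    log_mul h1 h2, log_pow, h16]
  push_cast
  ring

theorem one_sub_sq_pos (h : |r1| < 1) : 0 < 1 - r1 ^ 2 := by
  rw [sub_pos, sq_lt_one_iff_abs_lt_one]
  exact h

theorem dBRatio_eq_one_add (h1 : |r1| < 1) (h2 : |r2| < 1) :
    dBRatio r1 r2 = 1 + (r1 - r2) ^ 2 * ((r1 + r2) ^ 2 + 4 * (r1 * r2 + 2)) /
      (16 * ((1 - r1 ^ 2) * (1 - r2 ^ 2))) := by
  have := one_sub_sq_pos h1
  have := one_sub_sq_pos h2
  rw [dBRatio]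
  field_simp
  ring

theorem one_le_dBRatio_and_eq_one_iff (h1 : |r1| < 1) (h2 : |r2| < 1) :
    1 ≤ dBRatio r1 r2 ∧ (dBRatio r1 r2 = 1 ↔ r1 = r2) := by
  have hprod : -1 < r1 * r2 := by
    have : |r1 * r2| < 1 := by
      rw [abs_mul]
      nlinarith [abs_nonneg r1, abs_nonneg r2]
    exact (abs_lt.1 this).1
  have hden : 0 < 16 * ((1 - r1 ^ 2) * (1 - r2 ^ 2)) := by
    have := one_sub_sq_pos h1
    have := one_sub_sq_pos h2
    positivity
  have hfactor : 0 < (r1 + r2) ^ 2 + 4 * (r1 * r2 + 2) := by nlinarith [sq_nonneg (r1 + r2)]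
  rw [dBRatio_eq_one_add h1 h2, le_add_iff_nonneg_right, add_eq_left,
    div_eq_zero_iff, mul_eq_zero, sq_eq_zero_iff, sub_eq_zero]
  refine ⟨by positivity, ?_⟩
  simp only [hfactor.ne', hden.ne', or_false]

end

theorem dB_nonneg_and_eq_zero_iff {L r1 r2 : ℝ} (hL : 0 < L) (h1 : |r1| < 1) (h2 : |r2| < 1) :
    0 ≤ dB L r1 r2 ∧ (dB L r1 r2 = 0 ↔ r1 = r2) := by
  have h12 : 4 - (r1 + r2) ^ 2 ≠ 0 := by
    have : |r1 + r2| < 2 := (abs_add_le r1 r2).trans_lt (by linarith)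
    nlinarith [sq_abs (r1 + r2), abs_nonneg (r1 + r2)]
  obtain ⟨hone_le, heq_one⟩ := one_le_dBRatio_and_eq_one_iff h1 h2
  rw [dB_eq_mul_log_dBRatio L (one_sub_sq_pos h1).ne' (one_sub_sq_pos h2).ne' h12]
  refine ⟨mul_nonneg (by positivity) (log_nonneg hone_le), ?_⟩
  rw [mul_eq_zero, or_iff_right (half_pos hL).ne', ← heq_one]
  refine ⟨fun hlog => ?_, fun hq => by rw [hq, log_one]⟩
  rcases log_eq_zero.1 hlog with hq | hq | hq <;> linarith

theorem stmt_5 (L r1 r2 : ℝ) (hL : 0 < L)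
    (h1 : r1 ∈ Set.Ico (0 : ℝ) 1) (h2 : r2 ∈ Set.Ico (0 : ℝ) 1) :
    0 ≤ dB L r1 r2 ∧ (dB L r1 r2 = 0 ↔ r1 = r2) := by
  have habs {r : ℝ} (hr : r ∈ Set.Ico (0 : ℝ) 1) : |r| < 1 :=
    abs_lt.2 ⟨by linarith [hr.1], hr.2⟩
  exact dB_nonneg_and_eq_zero_iff hL (habs h1) (habs h2)
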